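/- Let n ≥ 2 be an integer and let A be a finite-valued Young function with A(t) > 0 for t > 0, satisfying ∫₀ (τ/A(τ))^{1/(n−1)} dτ < ∞ near zero and ∫^∞ (τ/A(τ))^{1/(n−1)} dτ = ∞. If A satisfies the ∇₂-condition globally, then the Sobolev trace conjugate A_T also satisfies the ∇₂-condition globally. -/

import Mathlib

open MeasureTheory Set Filter
open scoped ENNReal

/-- A finite-valued Young function: convex, vanishing at `0`, nonnegative on `[0,∞)`,
and not identically zero there. -/
structure IsYoung (A : ℝ → ℝ) : Prop where
  zero : A 0 = 0
  nonneg : ∀ t, 0 ≤ t → 0 ≤ A t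
  convex : ConvexOn ℝ (Set.Ici 0) A
  nontrivial : ∃ t, 0 < t ∧ 0 < A t

/-- `H_n(t) = ( ∫₀^t (τ/A(τ))^{1/(n−1)} dτ )^{1/n′}`, where `n′ = n/(n−1)`. -/
noncomputable def Hn (A : ℝ → ℝ) (n : ℕ) (t : ℝ) : ℝ :=
  ((∫⁻ τ in Set.Ioc (0:ℝ) t,
      ENNReal.ofReal ((τ / A τ) ^ (1/((n:ℝ)-1)))).toReal) ^ (((n:ℝ)-1)/n)

/-- The inverse of `H_n` (as a generalized inverse). -/
noncomputable def HnInv (A : ℝ → ℝ) (n : ℕ) (t : ℝ) : ℝ :=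
  sInf {s : ℝ | 0 ≤ s ∧ t ≤ Hn A n s}

/-- The Sobolev trace conjugate `A_T(t) = ∫₀^t A(H_n⁻¹(τ))/H_n⁻¹(τ) dτ`. -/
noncomputable def AT (A : ℝ → ℝ) (n : ℕ) (t : ℝ) : ℝ :=
  ∫ τ in Set.Ioc (0:ℝ) t, A (HnInv A n τ) / HnInv A n τ

/-- `∫₀ (τ/A(τ))^{1/(n−1)} dτ < ∞` near zero. -/
def ConvNearZero (A : ℝ → ℝ) (n : ℕ) : Prop :=
  ∃ δ > (0:ℝ), (∫⁻ τ in Set.Ioc (0:ℝ) δ,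
    ENNReal.ofReal ((τ / A τ) ^ (1/((n:ℝ)-1)))) < ⊤

/-- `∫^∞ (τ/A(τ))^{1/(n−1)} dτ = ∞`. -/
def DivNearInfty (A : ℝ → ℝ) (n : ℕ) : Prop :=
  (∫⁻ τ in Set.Ioi (1:ℝ), ENNReal.ofReal ((τ / A τ) ^ (1/((n:ℝ)-1)))) = ⊤

/-- `A` satisfies the `∇₂`-condition globally. -/
def Nabla2Global (A : ℝ → ℝ) : Prop :=
  ∃ c > (2:ℝ), ∀ t ≥ (0:ℝ), c * A t ≤ A (2 * t)

/-!
The integrand `g = A(H_n⁻¹)/H_n⁻¹` of `A_T` is nondecreasing and `A_T(2t) = 2 ∫₀ᵗ g(2τ) dτ`, so it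
suffices to prove `g(2τ) ≥ (c/2) g(τ)`. The density `(τ/A(τ))^{1/(n-1)}` is nonincreasing, hence its
primitive `F` satisfies `F(2s) ≤ 2F(s)`; as `1/n' ≤ 1`, also `H_n(2s) ≤ 2H_n(s)`, that is
`H_n⁻¹(2τ) ≥ 2H_n⁻¹(τ)`. With `u = H_n⁻¹(τ)`, monotonicity of `A(t)/t` and the `∇₂`-condition give
`g(2τ) ≥ A(2u)/(2u) ≥ (c/2) A(u)/u`.
-/

theorem ConvexOn.monotoneOn_div_self {f : ℝ → ℝ} (hf : ConvexOn ℝ (Ici 0) f) (h0 : f 0 = 0) :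
    MonotoneOn (fun t => f t / t) (Ioi 0) := fun x hx y hy hxy => by
  simpa only [h0, sub_zero] using
    hf.secant_mono self_mem_Ici (mem_Ici.2 (le_of_lt hx)) (mem_Ici.2 (le_of_lt hy))
      (ne_of_gt hx) (ne_of_gt hy) hxy

theorem Real.rpow_le_two_mul_rpow {x y e : ℝ} (hx : 0 ≤ x) (hxy : x ≤ 2 * y) (he₀ : 0 ≤ e)
    (he₁ : e ≤ 1) : x ^ e ≤ 2 * y ^ e := by
  have hy : 0 ≤ y := by linarith
  calc x ^ e ≤ (2 * y) ^ e := Real.rpow_le_rpow hx hxy he₀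
    _ = 2 ^ e * y ^ e := Real.mul_rpow zero_le_two hy
    _ ≤ 2 ^ (1 : ℝ) * y ^ e :=
      mul_le_mul_of_nonneg_right (Real.rpow_le_rpow_of_exponent_le one_le_two he₁) (by positivity)
    _ = 2 * y ^ e := by rw [Real.rpow_one]

section LintegralIoc

variable {f : ℝ → ℝ≥0∞}

theorem lintegral_Ioc_two_mul_le (hf : AntitoneOn f (Ioi 0)) {s : ℝ} (hs : 0 ≤ s) :
    ∫⁻ x in Ioc 0 (2 * s), f x ≤ 2 * ∫⁻ x in Ioc 0 s, f x := by
  have hright : ∫⁻ x in Ioc s (2 * s), f x ≤ ∫⁻ x in Ioc 0 s, f x :=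
    calc ∫⁻ x in Ioc s (2 * s), f x ≤ ∫⁻ _ in Ioc s (2 * s), f s :=
          setLIntegral_mono' measurableSet_Ioc fun x hx =>
            have hs' : 0 < s := by linarith [hx.1, hx.2]
            hf hs' (hs'.trans hx.1) hx.1.le
      _ = ∫⁻ _ in Ioc 0 s, f s := by
          simp only [setLIntegral_const, Real.volume_Ioc]
          ring_nf
      _ ≤ ∫⁻ x in Ioc 0 s, f x :=
          setLIntegral_mono' measurableSet_Ioc fun x hx => hf hx.1 (hx.1.trans_le hx.2) hx.2
  calc ∫⁻ x in Ioc 0 (2 * s), f x = ∫⁻ x in Ioc 0 s ∪ Ioc s (2 * s), f x := by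
        rw [Ioc_union_Ioc_eq_Ioc hs (by linarith)]
    _ ≤ (∫⁻ x in Ioc 0 s, f x) + ∫⁻ x in Ioc s (2 * s), f x := lintegral_union_le f _ _
    _ ≤ 2 * ∫⁻ x in Ioc 0 s, f x := by
        rw [two_mul (∫⁻ x in Ioc 0 s, f x)]
        exact add_le_add le_rfl hright

theorem lintegral_Ioc_ne_top (hf : AntitoneOn f (Ioi 0)) {δ : ℝ} (hδ : 0 < δ)
    (hfδ : ∫⁻ x in Ioc 0 δ, f x ≠ ⊤) (t : ℝ) : ∫⁻ x in Ioc 0 t, f x ≠ ⊤ := by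
  have hpow (k : ℕ) : ∫⁻ x in Ioc 0 (2 ^ k * δ), f x ≤ 2 ^ k * ∫⁻ x in Ioc 0 δ, f x := by
    induction k with
    | zero => simp
    | succ k ih =>
      calc ∫⁻ x in Ioc 0 (2 ^ (k + 1) * δ), f x
          = ∫⁻ x in Ioc 0 (2 * (2 ^ k * δ)), f x := by ring_nf
        _ ≤ 2 * ∫⁻ x in Ioc 0 (2 ^ k * δ), f x := lintegral_Ioc_two_mul_le hf (by positivity)
        _ ≤ 2 * (2 ^ k * ∫⁻ x in Ioc 0 δ, f x) := by gcongr
        _ = 2 ^ (k + 1) * ∫⁻ x in Ioc 0 δ, f x := by ring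
  obtain ⟨k, hk⟩ := pow_unbounded_of_one_lt (t / δ) one_lt_two
  have htk : t ≤ 2 ^ k * δ := ((div_lt_iff₀ hδ).1 hk).le
  exact ne_top_of_le_ne_top (ENNReal.mul_ne_top (ENNReal.pow_ne_top ENNReal.ofNat_ne_top) hfδ)
    ((lintegral_mono_set (Ioc_subset_Ioc_right htk)).trans (hpow k))

theorem exists_lt_lintegral_Ioc_natCast {a : ℝ} (h : ∫⁻ x in Ioi a, f x = ⊤)
    {M : ℝ≥0∞} (hM : M < ⊤) : ∃ k : ℕ, M < ∫⁻ x in Ioc a k, f x := by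
  have hunion : ⋃ k : ℕ, Ioc a (k : ℝ) = Ioi a :=
    iUnion_Ioc_eq_Ioi_self_iff.2 fun x _ => exists_nat_ge x
  have hdir : Directed (· ⊆ ·) fun k : ℕ => Ioc a (k : ℝ) :=
    Monotone.directed_le fun i j hij => Ioc_subset_Ioc_right (by exact_mod_cast hij)
  rw [← hunion, setLIntegral_iUnion_of_directed _ hdir] at h
  exact lt_iSup_iff.1 (h ▸ hM)

end LintegralIoc

namespace IsYoung

variable {A : ℝ → ℝ}

theorem monotoneOn_div_self (hA : IsYoung A) : MonotoneOn (fun t => A t / t) (Ioi 0) :=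
  hA.convex.monotoneOn_div_self hA.zero

theorem antitoneOn_div_rpow (hA : IsYoung A) (hApos : ∀ t > (0:ℝ), 0 < A t) {p : ℝ}
    (hp : 0 ≤ p) : AntitoneOn (fun t => (t / A t) ^ p) (Ioi 0) := fun a ha b hb hab => by
  have hslope : A a / a ≤ A b / b := hA.monotoneOn_div_self ha hb hab
  have hdiv : b / A b ≤ a / A a := by
    rw [← inv_div, ← inv_div (A a)]
    exact inv_anti₀ (div_pos (hApos a ha) ha) hslope
  exact Real.rpow_le_rpow (div_nonneg (le_of_lt hb) (hA.nonneg b (le_of_lt hb))) hdiv hp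

variable {u : ℝ → ℝ}

theorem monotone_comp_div (hA : IsYoung A) (hu : Monotone u) (hu₀ : ∀ τ, 0 ≤ u τ) :
    Monotone fun τ => A (u τ) / u τ := fun x y hxy => by
  rcases (hu₀ x).eq_or_lt with hx | hx
  · simp only [← hx, div_zero]
    exact div_nonneg (hA.nonneg _ (hu₀ y)) (hu₀ y)
  · exact hA.monotoneOn_div_self hx (hx.trans_le (hu hxy)) (hu hxy)

theorem mul_comp_div_le_comp_two_mul (hA : IsYoung A) (hu₀ : ∀ τ, 0 ≤ u τ)
    (hu₂ : ∀ τ, 2 * u τ ≤ u (2 * τ)) {c : ℝ}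
    (hcA : ∀ t ≥ (0:ℝ), c * A t ≤ A (2 * t)) (τ : ℝ) :
    c / 2 * (A (u τ) / u τ) ≤ A (u (2 * τ)) / u (2 * τ) := by
  rcases (hu₀ τ).eq_or_lt with hτ | hτ
  · simp only [← hτ, div_zero, mul_zero]
    exact div_nonneg (hA.nonneg _ (hu₀ _)) (hu₀ _)
  · calc c / 2 * (A (u τ) / u τ) = c * A (u τ) / (2 * u τ) := div_mul_div_comm c 2 _ _
      _ ≤ A (2 * u τ) / (2 * u τ) := by gcongr; exact hcA _ (hu₀ τ)
      _ ≤ A (u (2 * τ)) / u (2 * τ) :=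
          hA.monotoneOn_div_self (mem_Ioi.2 (by positivity)) (mem_Ioi.2 (by linarith [hu₂ τ])) (hu₂ τ)

end IsYoung

theorem mul_integral_Ioc_le_integral_Ioc_two_mul {g : ℝ → ℝ} (hg : Monotone g) {c t : ℝ}
    (ht : 0 ≤ t) (hcg : ∀ x ∈ Icc 0 t, c / 2 * g x ≤ g (2 * x)) :
    c * ∫ x in Ioc 0 t, g x ≤ ∫ x in Ioc 0 (2 * t), g x := by
  rw [← intervalIntegral.integral_of_le ht, ← intervalIntegral.integral_of_le (by linarith)]
  have hscale : ∫ x in (0:ℝ)..2 * t, g x = 2 * ∫ x in (0:ℝ)..t, g (2 * x) := by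
    have := intervalIntegral.smul_integral_comp_mul_left (a := 0) (b := t) g 2
    rw [mul_zero, smul_eq_mul] at this
    exact this.symm
  have hpointwise : ∫ x in (0:ℝ)..t, c / 2 * g x ≤ ∫ x in (0:ℝ)..t, g (2 * x) :=
    intervalIntegral.integral_mono_on ht (hg.intervalIntegrable.const_mul _)
      (hg.comp fun _ _ h => by linarith : Monotone fun x => g (2 * x)).intervalIntegrable hcg
  rw [intervalIntegral.integral_const_mul] at hpointwise
  linarith

section Hn

variable {A : ℝ → ℝ} {n : ℕ}

theorem antitoneOn_ofReal_Hn_density (hn : 1 ≤ n) (hA : IsYoung A)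
    (hApos : ∀ t > (0:ℝ), 0 < A t) :
    AntitoneOn (fun τ => ENNReal.ofReal ((τ / A τ) ^ (1/((n:ℝ)-1)))) (Ioi 0) :=
  ENNReal.ofReal_mono.comp_antitoneOn <| hA.antitoneOn_div_rpow hApos <| by
    have : (1:ℝ) ≤ n := by exact_mod_cast hn
    exact one_div_nonneg.2 (by linarith)

theorem lintegral_Hn_density_ne_top (hn : 1 ≤ n) (hA : IsYoung A)
    (hApos : ∀ t > (0:ℝ), 0 < A t) (hconv : ConvNearZero A n) (t : ℝ) :
    ∫⁻ τ in Ioc 0 t, ENNReal.ofReal ((τ / A τ) ^ (1/((n:ℝ)-1))) ≠ ⊤ := by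
  obtain ⟨δ, hδ, hfin⟩ := hconv
  exact lintegral_Ioc_ne_top (antitoneOn_ofReal_Hn_density hn hA hApos) hδ hfin.ne t

theorem Hn_two_mul_le (hn : 1 ≤ n) (hA : IsYoung A) (hApos : ∀ t > (0:ℝ), 0 < A t)
    (hconv : ConvNearZero A n) {s : ℝ} (hs : 0 ≤ s) : Hn A n (2 * s) ≤ 2 * Hn A n s := by
  have hn' : (1:ℝ) ≤ n := by exact_mod_cast hn
  have hF := ENNReal.toReal_mono
    (ENNReal.mul_ne_top ENNReal.ofNat_ne_top (lintegral_Hn_density_ne_top hn hA hApos hconv s))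
    (lintegral_Ioc_two_mul_le (antitoneOn_ofReal_Hn_density hn hA hApos) hs)
  rw [ENNReal.toReal_mul, ENNReal.toReal_ofNat] at hF
  exact Real.rpow_le_two_mul_rpow ENNReal.toReal_nonneg hF (by positivity)
    (div_le_one_of_le₀ (by linarith) (by positivity))

theorem exists_le_Hn (hn : 2 ≤ n) (hA : IsYoung A) (hApos : ∀ t > (0:ℝ), 0 < A t)
    (hconv : ConvNearZero A n) (hdiv : DivNearInfty A n) (M : ℝ) :
    ∃ s, 0 ≤ s ∧ M ≤ Hn A n s := by
  have hn' : (2:ℝ) ≤ n := by exact_mod_cast hn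
  have he : 0 < ((n:ℝ) - 1) / n := div_pos (by linarith) (by linarith)
  obtain ⟨k, hk⟩ := exists_lt_lintegral_Ioc_natCast hdiv
    (ENNReal.ofReal_lt_top (r := M ^ (((n:ℝ) - 1) / n)⁻¹))
  refine ⟨k, k.cast_nonneg, ?_⟩
  rcases le_or_gt M 0 with hM | hM
  · exact hM.trans (Real.rpow_nonneg ENNReal.toReal_nonneg _)
  have hfin := lintegral_Hn_density_ne_top (one_le_two.trans hn) hA hApos hconv k
  have hK := (ENNReal.ofReal_le_iff_le_toReal hfin).1
    (hk.le.trans (lintegral_mono_set (Ioc_subset_Ioc_left zero_le_one)))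
  exact (Real.rpow_inv_le_iff_of_pos hM.le ENNReal.toReal_nonneg he).1 hK

theorem HnInv_nonneg (τ : ℝ) : 0 ≤ HnInv A n τ := Real.sInf_nonneg fun _ hs => hs.1

theorem HnInv_mono (hH : ∀ M, ∃ s, 0 ≤ s ∧ M ≤ Hn A n s) : Monotone (HnInv A n) :=
  fun _ τ₂ h => csInf_le_csInf ⟨0, fun _ hs => hs.1⟩ (hH τ₂) fun _ hs => ⟨hs.1, h.trans hs.2⟩

theorem two_mul_HnInv_le (hH : ∀ M, ∃ s, 0 ≤ s ∧ M ≤ Hn A n s)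
    (hdbl : ∀ s, 0 ≤ s → Hn A n (2 * s) ≤ 2 * Hn A n s) (τ : ℝ) :
    2 * HnInv A n τ ≤ HnInv A n (2 * τ) := by
  refine le_csInf (hH (2 * τ)) fun b ⟨hb, hτb⟩ => ?_
  have hhalf : τ ≤ Hn A n (b / 2) := by
    have := hdbl (b / 2) (by positivity)
    rw [mul_div_cancel₀ b two_ne_zero] at this
    linarith
  have : HnInv A n τ ≤ b / 2 := csInf_le ⟨0, fun _ hs => hs.1⟩ ⟨by positivity, hhalf⟩
  linarith

end Hn

theorem AT_nabla2 (n : ℕ) (hn : 2 ≤ n) (A : ℝ → ℝ) (hA : IsYoung A)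
    (hApos : ∀ t > (0:ℝ), 0 < A t)
    (hconv : ConvNearZero A n) (hdiv : DivNearInfty A n)
    (hnabla : Nabla2Global A) :
    Nabla2Global (AT A n) := by
  obtain ⟨c, hc, hcA⟩ := hnabla
  have hH := exists_le_Hn hn hA hApos hconv hdiv
  have hdbl : ∀ s, 0 ≤ s → Hn A n (2 * s) ≤ 2 * Hn A n s :=
    fun _ hs => Hn_two_mul_le (one_le_two.trans hn) hA hApos hconv hs
  refine ⟨c, hc, fun t ht => ?_⟩
  exact mul_integral_Ioc_le_integral_Ioc_two_mul
    (hA.monotone_comp_div (HnInv_mono hH) HnInv_nonneg) ht fun x _ =>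
      hA.mul_comp_div_le_comp_two_mul HnInv_nonneg (two_mul_HnInv_le hH hdbl) hcA x
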